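/- Let U ⊆ ℂ∖({0} ∪ {z_1,…,z_n}) be open and let h : U → ℂ be holomorphic, nowhere vanishing, with logarithmic derivative h′(x)/h(x) = −Σ_{s=1}^n (m_s/2)/(x − z_s) (i.e. h is a branch of Π_s (x − z_s)^{−m_s/2}). Then for every holomorphic V-valued function f on U and every x ∈ U: (1/(2πi·x)²)·h(x)^{−1}·[ (2πi)²·( x²·(h·f)″(x) + x·(h·f)′(x) ) + D_2(x)(h(x)·f(x)) ] = f″(x) + [ 1/x − Σ_s m_s/(x − z_s) ]·f′(x) + [ −(1/x)·Σ_s (m_s/2)/(x − z_s) + Σ_s (m_s(m_s+2)/4)/(x − z_s)² + Σ_{s≠p} (m_s·m_p/4)/((x − z_s)(x − z_p)) − (μ² + μ(e11−e22) − e11·e22)/(4x²) − (1/x²)·Σ_s ( z_s·(m_s(m_s+2)/4 + K_s(z,μ))/(x − z_s) + z_s²·(m_s(m_s+2)/4)/(x − z_s)² ) ]·f(x). (This is the conjugation formula 𝒟^c = (1/(2πi·x)²)·Π_s(x−z_s)^{m_s/2} · 𝒟 · Π_s(x−z_s)^{−m_s/2} for the universal differential operator 𝒟 = ∂_u² + D_2(x),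 ∂_u = −2πi·x·∂_x.) -/

import Mathlib

open Complex Finset

namespace Paper

noncomputable section

variable {n : ℕ}

/-- The index set of the natural basis of `V = V_{m 0} ⊗ ⋯ ⊗ V_{m (n-1)}`:
the basis vector `v_{i_1} ⊗ ⋯ ⊗ v_{i_n}` corresponds to the index `(i_1,…,i_n)`. -/
abbrev Idx (m : Fin n → ℕ) := ∀ s : Fin n, Fin (m s + 1)

/-- The tensor product `V = V_{m 0} ⊗ ⋯ ⊗ V_{m (n-1)}` realized concretely as the space of
ℂ-valued functions on the index set of its natural basis. -/
abbrev TV (m : Fin n → ℕ) := Idx m → ℂ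

/-- The linear operator `f ↦ (i ↦ c i * f (g i))`; all the basic operators below are of
this form. -/
def mulShift {ι : Type*} (c : ι → ℂ) (g : ι → ι) : Module.End ℂ (ι → ℂ) where
  toFun f i := c i * f (g i)
  map_add' f h := by funext i; simp [mul_add]
  map_smul' a f := by
    funext i
    simp only [Pi.smul_apply, smul_eq_mul, RingHom.id_apply]
    ring

variable (m : Fin n → ℕ)

/-- `e11` acting in the `s`-th tensor factor: `e11 · v_k = ((m-2k)/2) v_k`. -/
def E11 (s : Fin n) : Module.End ℂ (TV m) :=
  mulShift (fun idx => ((m s : ℂ) - 2 * ((idx s : ℕ) : ℂ)) / 2) id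

/-- `e22` acting in the `s`-th tensor factor: `e22 · v_k = -((m-2k)/2) v_k`. -/
def E22 (s : Fin n) : Module.End ℂ (TV m) :=
  mulShift (fun idx => -(((m s : ℂ) - 2 * ((idx s : ℕ) : ℂ)) / 2)) id

/-- `e21` acting in the `s`-th tensor factor: `e21 · v_k = (k+1) v_{k+1}`. -/
def E21 (s : Fin n) : Module.End ℂ (TV m) :=
  mulShift (fun idx => ((idx s : ℕ) : ℂ)) (fun idx => Function.update idx s (idx s - 1))

/-- `e12` acting in the `s`-th tensor factor: `e12 · v_k = (m-k+1) v_{k-1}`. -/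
def E12 (s : Fin n) : Module.End ℂ (TV m) :=
  mulShift (fun idx => (m s : ℂ) - ((idx s : ℕ) : ℂ)) (fun idx => Function.update idx s (idx s + 1))

/-- The diagonal action `e11 = Σ_s e11^{(s)}` on the tensor product. -/
def e11T : Module.End ℂ (TV m) := ∑ s, E11 m s
def e22T : Module.End ℂ (TV m) := ∑ s, E22 m s
def e21T : Module.End ℂ (TV m) := ∑ s, E21 m s
def e12T : Module.End ℂ (TV m) := ∑ s, E12 m s

/-- `v ∈ V[ν]`, i.e. `(e11 - e22) v = ν v`. -/
def inWt (ν : ℤ) (v : TV m) : Prop := (e11T m - e22T m) v = ((ν : ℤ) : ℂ) • v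

/-- The Weyl involution `σ`, acting by `σ v_k = (-1)^k v_{m-k}` in each factor. -/
def sigmaOp : Module.End ℂ (TV m) :=
  mulShift (fun idx => ∏ s, (-1 : ℂ) ^ (m s - (idx s : ℕ))) (fun idx s => (idx s).rev)

/-- The weight of a basis vector: `wt(i) = Σ_s (m_s - 2 i_s)`. -/
def wt (idx : Idx m) : ℤ := ∑ s, ((m s : ℤ) - 2 * ((idx s : ℕ) : ℤ))

/-- The operator `p(κ) = Σ_{k ≥ 0} e21^k e12^k (1/k!) Π_{j=0}^{k-1} (κ + e22 - e11 - j)^{-1}`.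
The operator `e22 - e11` is diagonal in the chosen basis with eigenvalue `-wt(idx)` on the
basis vector labelled by `idx`, so the (partial) inverses `(κ + e22 - e11 - j)^{-1}` are the
diagonal operators with entries `(κ - wt(idx) - j)⁻¹`.  The sum is finite on `V` since
`e12` is nilpotent:  `e12^k = 0` for `k > M = Σ_s m_s`. -/
def pOp (κ : ℂ) : Module.End ℂ (TV m) :=
  ∑ k ∈ Finset.range ((∑ s, m s) + 1),
    (e21T m) ^ k * (e12T m) ^ k *
      mulShift (fun idx => ((k.factorial : ℂ))⁻¹ *
        ∏ j ∈ Finset.range k, (κ - ((wt m idx : ℤ) : ℂ) - (j : ℂ))⁻¹) id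

/-- The operator `𝒜(κ) = σ ∘ p(κ)`. -/
def Aop (κ : ℂ) : Module.End ℂ (TV m) := sigmaOp m * pOp m κ

/-- `Ω₀^{(s,t)} = e11^{(s)} e11^{(t)} + e22^{(s)} e22^{(t)}`. -/
def Om0 (s t : Fin n) : Module.End ℂ (TV m) := E11 m s * E11 m t + E22 m s * E22 m t

/-- `Ω₁₂^{(s,t)} = e12^{(s)} e21^{(t)}`. -/
def Om12 (s t : Fin n) : Module.End ℂ (TV m) := E12 m s * E21 m t

/-- `Ω₂₁^{(s,t)} = e21^{(s)} e12^{(t)}`. -/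
def Om21 (s t : Fin n) : Module.End ℂ (TV m) := E21 m s * E12 m t

/-- The trigonometric r-matrix `r^{(s,t)}(x) = (Ω₊ x + Ω₋)/(x-1)` acting in the `s`-th and
`t`-th tensor factors, where `Ω₊ = ½Ω₀ + Ω₁₂` and `Ω₋ = ½Ω₀ + Ω₂₁`. -/
def rOp (s t : Fin n) (x : ℂ) : Module.End ℂ (TV m) :=
  (x - 1)⁻¹ • (x • ((2 : ℂ)⁻¹ • Om0 m s t + Om12 m s t) + ((2 : ℂ)⁻¹ • Om0 m s t + Om21 m s t))

/-- The trigonometric Gaudin operators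
`K_s(z,μ) = (μ/2)(e11-e22)^{(s)} + Σ_{t ≠ s} r^{(s,t)}(z_s/z_t)`. -/
def Kop (z : Fin n → ℂ) (μ : ℂ) (s : Fin n) : Module.End ℂ (TV m) :=
  (μ / 2) • (E11 m s - E22 m s) + ∑ t ∈ Finset.univ.erase s, rOp m s t (z s / z t)

/-- The matrix entry `M₁₁(x) = 2πi Σ_s (1-x/z_s)⁻¹ e11^{(s)} - πi e11`. -/
def M11 (z : Fin n → ℂ) (x : ℂ) : Module.End ℂ (TV m) :=
  (2 * (Real.pi : ℂ) * I) • (∑ s, (1 - x / z s)⁻¹ • E11 m s) - ((Real.pi : ℂ) * I) • e11T m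

/-- `M₁₂(x) = 2πi Σ_s (1-x/z_s)⁻¹ e21^{(s)} - 2πi e21`. -/
def M12 (z : Fin n → ℂ) (x : ℂ) : Module.End ℂ (TV m) :=
  (2 * (Real.pi : ℂ) * I) • (∑ s, (1 - x / z s)⁻¹ • E21 m s) -
    (2 * (Real.pi : ℂ) * I) • e21T m

/-- `M₂₁(x) = 2πi Σ_s (1-x/z_s)⁻¹ e12^{(s)}`. -/
def M21 (z : Fin n → ℂ) (x : ℂ) : Module.End ℂ (TV m) :=
  (2 * (Real.pi : ℂ) * I) • (∑ s, (1 - x / z s)⁻¹ • E12 m s)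

/-- `M₂₂(x) = 2πi Σ_s (1-x/z_s)⁻¹ e22^{(s)} - πi e22`. -/
def M22 (z : Fin n → ℂ) (x : ℂ) : Module.End ℂ (TV m) :=
  (2 * (Real.pi : ℂ) * I) • (∑ s, (1 - x / z s)⁻¹ • E22 m s) - ((Real.pi : ℂ) * I) • e22T m

/-- The derivative `(dM₂₂/dx)(x) = 2πi Σ_s z_s⁻¹ (1-x/z_s)⁻² e22^{(s)}`. -/
def M22d (z : Fin n → ℂ) (x : ℂ) : Module.End ℂ (TV m) :=
  (2 * (Real.pi : ℂ) * I) • (∑ s, ((z s)⁻¹ * ((1 - x / z s)⁻¹) ^ 2) • E22 m s)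

/-- The coefficient `D₂(x)` of the universal differential operator
`𝒟 = cdet [[∂_u - πiμ + M₁₁, M₁₂],[M₂₁, ∂_u + πiμ + M₂₂]] = ∂_u² + D₁(x) ∂_u + D₂(x)`
(where `x = e^{-2πiu}`, `∂_u = -2πi x ∂_x`), namely
`D₂(x) = (-πiμ + M₁₁(x)) ∘ (πiμ + M₂₂(x)) - 2πi x (dM₂₂/dx)(x) - M₂₁(x) ∘ M₁₂(x)`. -/
def D2 (z : Fin n → ℂ) (μ : ℂ) (x : ℂ) : Module.End ℂ (TV m) :=
  (-(((Real.pi : ℂ) * I * μ)) • (1 : Module.End ℂ (TV m)) + M11 m z x) *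
      ((((Real.pi : ℂ) * I * μ)) • (1 : Module.End ℂ (TV m)) + M22 m z x)
    - (2 * (Real.pi : ℂ) * I * x) • M22d m z x
    - M21 m z x * M12 m z x

/-- The Bethe ansatz equations for the triple `(z; μ; V[ν])`, `ν = M - 2m'`:  `t` is a tuple
of pairwise distinct complex numbers, each nonzero and distinct from every `z_s`, with
`(1 - μ + ν/2)/t_i + Σ_{j≠i} 2/(t_i - t_j) - Σ_s m_s/(t_i - z_s) = 0` for all `i`. -/
def BAE (z : Fin n → ℂ) (μ : ℂ) {m' : ℕ} (t : Fin m' → ℂ) : Prop :=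
  Function.Injective t ∧ (∀ i, t i ≠ 0) ∧ (∀ i s, t i ≠ z s) ∧
    ∀ i, (1 - μ + ((∑ s, (m s : ℂ)) - 2 * (m' : ℂ)) / 2) / t i
        + (∑ j ∈ Finset.univ.erase i, 2 / (t i - t j))
        - ∑ s, (m s : ℂ) / (t i - z s) = 0

/-- The partial sum `ℓ_1 + ⋯ + ℓ_{s-1}` (0-based). -/
def pref (ℓv : Idx m) (s : Fin n) : ℕ :=
  ∑ u ∈ Finset.univ.filter (fun u => u < s), (ℓv u : ℕ)

/-- Extension of a tuple `t : Fin m' → ℂ` to a function on `ℕ` (by zero). -/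
def extt {m' : ℕ} (t : Fin m' → ℂ) : ℕ → ℂ := fun i => if h : i < m' then t ⟨i, h⟩ else 0

/-- The coordinate `ω_ℓ(t,z) = Σ_{ρ ∈ S_{m'}} Π_{s=1}^n Π_{i=ℓ_1+⋯+ℓ_{s-1}+1}^{ℓ_1+⋯+ℓ_s}
(t_{ρ(i)} - z_s)⁻¹` of the weight function. -/
def omegaCoeff (z : Fin n → ℂ) {m' : ℕ} (t : Fin m' → ℂ) (ℓv : Idx m) : ℂ :=
  ∑ ρ : Equiv.Perm (Fin m'), ∏ s : Fin n,
    ∏ i ∈ Finset.Ico (pref m ℓv s) (pref m ℓv s + (ℓv s : ℕ)), (extt (t ∘ ρ) i - z s)⁻¹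

/-- The Bethe vector (weight function) `ω(t,z) = Σ_{ℓ ∈ C} ω_ℓ(t,z) v_ℓ ∈ V[M - 2m']`. -/
def betheVec (z : Fin n → ℂ) {m' : ℕ} (t : Fin m' → ℂ) : TV m :=
  fun ℓv => if (∑ s, ((ℓv s : ℕ))) = m' then omegaCoeff m z t ℓv else 0

/-- The eigenvalue `k_s(t,z,μ) = (m_s/2)[(μ - ν/2 + m_s/2) + Σ_{p≠s} m_p z_s/(z_s-z_p)
+ 2 Σ_i z_s/(t_i - z_s)]`, with `ν = M - 2m'`. -/
def kEig (z : Fin n → ℂ) (μ : ℂ) {m' : ℕ} (t : Fin m' → ℂ) (s : Fin n) : ℂ :=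
  ((m s : ℂ) / 2) * ((μ - ((∑ u, (m u : ℂ)) - 2 * (m' : ℂ)) / 2 + (m s : ℂ) / 2)
    + (∑ p ∈ Finset.univ.erase s, (m p : ℂ) * z s / (z s - z p))
    + 2 * ∑ i, z s / (t i - z s))

/-- The scalar eigenvalue function `E₂(x, t, z, μ)` of `D₂(x)` on the Bethe vector, i.e.
the coefficient of the fundamental differential operator `ℰ = ∂_u² + E₂(x)`. -/
def E2fun (z : Fin n → ℂ) (μ : ℂ) {m' : ℕ} (t : Fin m' → ℂ) (x : ℂ) : ℂ :=
  (2 * (Real.pi : ℂ) * I) ^ 2 *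
    (-(μ + ((∑ u, (m u : ℂ)) - 2 * (m' : ℂ)) / 2) ^ 2 / 4
      + ∑ s, (((m s : ℂ) * ((m s : ℂ) + 2) / 4 + kEig m z μ t s) / (1 - x / z s)
          - ((m s : ℂ) * ((m s : ℂ) + 2) / 4) / (1 - x / z s) ^ 2))



/-- The right-hand side of the conjugation formula of Theorem 8.1: the `x`-dependent
`End(V)`-valued coefficient of the zeroth-order term of `𝒟ᶜ`. -/
noncomputable def DconjCoeff (n : ℕ) (m : Fin n → ℕ) (z : Fin n → ℂ) (μ : ℂ) (x : ℂ) :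
    Module.End ℂ (TV m) :=
  (-(1 / x) * (∑ s, ((m s : ℂ) / 2) / (x - z s))
      + (∑ s, ((m s : ℂ) * ((m s : ℂ) + 2) / 4) / (x - z s) ^ 2)
      + ∑ s, ∑ p ∈ Finset.univ.erase s,
          ((m s : ℂ) * (m p : ℂ) / 4) / ((x - z s) * (x - z p))) •
      (1 : Module.End ℂ (TV m))
    - ((4 : ℂ) * x ^ 2)⁻¹ • (μ ^ 2 • (1 : Module.End ℂ (TV m)) + μ • (e11T m - e22T m)
        - e11T m * e22T m)
    - (x ^ 2)⁻¹ • ∑ s,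
        ((z s / (x - z s)) • (((m s : ℂ) * ((m s : ℂ) + 2) / 4) • (1 : Module.End ℂ (TV m))
            + Kop m z μ s)
          + ((z s) ^ 2 * ((m s : ℂ) * ((m s : ℂ) + 2) / 4) / (x - z s) ^ 2) •
            (1 : Module.End ℂ (TV m)))

/-!
Write `S(x) = Σ_s (m_s/2)/(x - z_s)`, so that `h' = -S h`. Conjugation by `h` turns `x²∂² + x∂`
into `x²(∂² - 2S∂ + S² - S') + x(∂ - S)`; this gives the first-order coefficient and the scalar
part of the zeroth-order one. What remains is an identity in `End V`: with `c_s = m_s(m_s+2)/4`,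

  `D₂(x) = -(πi)²(μ² + μ(e11 - e22) - e11 e22)`
          `- (2πi)² Σ_s [z_s/(x - z_s) (c_s + K_s) + z_s² c_s/(x - z_s)²]`.

With `a_s = (1 - x/z_s)⁻¹` it follows from `e12 e21 = c - e11² + e11` on `V_m` and from

  `Σ_s a_s K_s = μ Σ_s a_s e11^{(s)}`
               `+ Σ_{s≠t} a_s (1 - a_t) (e11^{(s)} e11^{(t)} + e12^{(s)} e21^{(t)})`,

which holds because both sides have the same symmetrisation in `(s, t)`. The diagonal terms left
over are then compared entry by entry.
-/

section FiniteSums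

variable {ι M : Type*} [Fintype ι] [DecidableEq ι]

lemma sum_sum_eq_sum_add_sum_sum_erase [AddCommMonoid M] (F : ι → ι → M) :
    ∑ s, ∑ t, F s t = ∑ s, F s s + ∑ s, ∑ t ∈ univ.erase s, F s t := by
  rw [← sum_add_distrib]
  exact sum_congr rfl fun s _ => (add_sum_erase _ _ (mem_univ s)).symm

lemma sum_sum_erase_comm [AddCommMonoid M] (F : ι → ι → M) :
    ∑ s, ∑ t ∈ univ.erase s, F s t = ∑ s, ∑ t ∈ univ.erase s, F t s :=
  sum_comm' fun s t => by simp [eq_comm]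

lemma sum_sum_erase_eq_of_add_swap {K : Type*} [DivisionRing K] [CharZero K] [AddCommGroup M]
    [Module K M] {F G : ι → ι → M} (h : ∀ s t, s ≠ t → F s t + F t s = G s t + G t s) :
    ∑ s, ∑ t ∈ univ.erase s, F s t = ∑ s, ∑ t ∈ univ.erase s, G s t := by
  have hsymm : ∀ H : ι → ι → M, (2 : K) • ∑ s, ∑ t ∈ univ.erase s, H s t
      = ∑ s, ∑ t ∈ univ.erase s, (H s t + H t s) := fun H => by
    rw [two_smul]
    nth_rw 2 [sum_sum_erase_comm]
    simp only [← sum_add_distrib]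
  have h2 : (2 : K) • ∑ s, ∑ t ∈ univ.erase s, F s t
      = (2 : K) • ∑ s, ∑ t ∈ univ.erase s, G s t := by
    rw [hsymm, hsymm]
    exact sum_congr rfl fun s _ => sum_congr rfl fun t ht => h s t (ne_of_mem_erase ht).symm
  simpa using congrArg ((2 : K)⁻¹ • ·) h2

lemma sum_sum_erase_mul_mul {R : Type*} [CommRing R] (a u : ι → R) :
    ∑ s, ∑ t ∈ univ.erase s, a s * (1 - a t) * (u s * u t)
      = (∑ s, a s * u s) * ∑ s, u s - (∑ s, a s * u s) ^ 2 + ∑ s, a s * (a s - 1) * u s ^ 2 := by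
  have hfull := sum_sum_eq_sum_add_sum_sum_erase fun s t => a s * (1 - a t) * (u s * u t)
  have hexp : ∑ s, ∑ t, a s * (1 - a t) * (u s * u t)
      = (∑ s, a s * u s) * ∑ s, u s - (∑ s, a s * u s) ^ 2 := by
    rw [sq, sum_mul_sum, sum_mul_sum, ← sum_sub_distrib]
    exact sum_congr rfl fun s _ => by rw [← sum_sub_distrib]; exact sum_congr rfl fun t _ => by ring
  have hdiag : ∑ s, a s * (1 - a s) * (u s * u s) = -∑ s, a s * (a s - 1) * u s ^ 2 := by
    rw [← sum_neg_distrib]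
    exact sum_congr rfl fun s _ => by ring
  linear_combination hexp - hfull - hdiag

-- The entries of the diagonal part of `D2_eq`: `a s = (1 - x/z s)⁻¹`, `u s` is the eigenvalue of
-- `e11^{(s)}`, `C s = m_s(m_s+2)/4` and `p = πi`.
lemma gaudin_diagonal_identity (a u C : ι → ℂ) (p μ : ℂ) :
    -(2 * p * ∑ s, a s * u s - p * (μ + ∑ s, u s)) ^ 2
        + (2 * p) ^ 2 * ∑ s, a s * (a s - 1) * u s
        - (2 * p) ^ 2 * ∑ s, a s * (a s - 1) * (C s - u s ^ 2 + u s)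
      = -p ^ 2 * (μ + ∑ s, u s) ^ 2
        + (2 * p) ^ 2 * (-∑ s, (a s ^ 2 * C s - a s * C s) + μ * ∑ s, a s * u s
          + ∑ s, ∑ t ∈ univ.erase s, a s * (1 - a t) * (u s * u t)) := by
  have hsplit : ∑ s, a s * (a s - 1) * (C s - u s ^ 2 + u s)
      = ∑ s, (a s ^ 2 * C s - a s * C s) - (∑ s, a s ^ 2 * u s ^ 2 - ∑ s, a s * u s ^ 2)
        + ∑ s, a s * (a s - 1) * u s := by
    simp only [← sum_sub_distrib, ← sum_add_distrib]
    exact sum_congr rfl fun s _ => by ring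
  have hsq : ∑ s, a s * (a s - 1) * u s ^ 2 = ∑ s, a s ^ 2 * u s ^ 2 - ∑ s, a s * u s ^ 2 := by
    rw [← sum_sub_distrib]
    exact sum_congr rfl fun s _ => by ring
  rw [sum_sum_erase_mul_mul, hsplit, hsq]
  ring

end FiniteSums

lemma inv_one_sub_div_eq {x z : ℂ} (hz : z ≠ 0) : (1 - x / z)⁻¹ = z / (z - x) := by
  rw [one_sub_div hz, inv_div]

lemma mul_inv_mul_inv_one_sub_div_sq (x z : ℂ) :
    x * z⁻¹ * (1 - x / z)⁻¹ ^ 2 = (1 - x / z)⁻¹ * ((1 - x / z)⁻¹ - 1) := by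
  rcases eq_or_ne z 0 with rfl | hz
  · simp
  rcases eq_or_ne x z with rfl | hxz
  · simp [div_self hz]
  have : z - x ≠ 0 := sub_ne_zero.2 hxz.symm
  rw [inv_one_sub_div_eq hz]
  field_simp
  ring

section Operators

@[simp] lemma mulShift_apply {ι : Type*} (c : ι → ℂ) (g : ι → ι) (f : ι → ℂ) (i : ι) :
    mulShift c g f i = c i * f (g i) := rfl

def e11Eig (s : Fin n) : TV m := fun i => ((m s : ℂ) - 2 * ((i s : ℕ) : ℂ)) / 2

lemma E11_eq_lmul (s : Fin n) : E11 m s = Algebra.lmul ℂ (TV m) (e11Eig m s) :=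
  rfl

lemma E22_eq_neg_E11 (s : Fin n) : E22 m s = -E11 m s :=
  LinearMap.ext fun f => funext fun i => by simp [E22, E11]

lemma e22T_eq_neg_e11T : e22T m = -e11T m := by
  simp only [e22T, e11T, E22_eq_neg_E11, sum_neg_distrib]

lemma commute_E11 (s t : Fin n) : Commute (E11 m s) (E11 m t) := by
  rw [E11_eq_lmul, E11_eq_lmul]
  exact (Commute.all _ _).map _

lemma E12_mul_E21_self (s : Fin n) :
    E12 m s * E21 m s = ((m s : ℂ) * (m s + 2) / 4) • 1 - E11 m s ^ 2 + E11 m s := by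
  refine LinearMap.ext fun f => funext fun i => ?_
  simp only [E12, E21, E11, Module.End.mul_apply, pow_two, LinearMap.add_apply,
    LinearMap.sub_apply, LinearMap.smul_apply, Module.End.one_apply, mulShift_apply,
    Function.update_self, add_sub_cancel_right, Function.update_idem, Function.update_eq_self, id,
    Pi.add_apply, Pi.sub_apply, Pi.smul_apply, smul_eq_mul]
  rcases eq_or_ne (i s) (Fin.last (m s)) with h | h
  · simp only [h, Fin.val_last, Fin.last_add_one, Fin.val_zero]
    ring
  · rw [Fin.val_add_one, if_neg h]
    push_cast
    ring

lemma E21_mul_E12_comm {s t : Fin n} (h : s ≠ t) :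
    E21 m s * E12 m t = E12 m t * E21 m s := by
  refine LinearMap.ext fun f => funext fun i => ?_
  simp only [E12, E21, Module.End.mul_apply, mulShift_apply, Function.update_of_ne h,
    Function.update_of_ne h.symm, Function.update_comm h]
  ring

end Operators

section Gaudin

lemma rOp_eq {s t : Fin n} (h : s ≠ t) (y : ℂ) :
    rOp m s t y = (y - 1)⁻¹ • ((y + 1) • (E11 m s * E11 m t) + y • (E12 m s * E21 m t)
      + E12 m t * E21 m s) := by
  have h22 : E22 m s * E22 m t = E11 m s * E11 m t := by
    rw [E22_eq_neg_E11, E22_eq_neg_E11]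
    exact neg_mul_neg (α := Module.End ℂ (TV m)) _ _
  rw [rOp, Om0, Om12, Om21, h22, E21_mul_E12_comm m h]
  module

def pairSum (a : Fin n → ℂ) (A B : Fin n → Module.End ℂ (TV m)) : Module.End ℂ (TV m) :=
  ∑ s, ∑ t ∈ univ.erase s, (a s * (1 - a t)) • (A s * B t)

variable {z : Fin n → ℂ} {x : ℂ}

lemma sum_smul_Kop (hz0 : ∀ s, z s ≠ 0) (hz : Function.Injective z) (hx : ∀ s, x ≠ z s)
    (μ : ℂ) :
    ∑ s, (1 - x / z s)⁻¹ • Kop m z μ s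
      = μ • ∑ s, (1 - x / z s)⁻¹ • E11 m s
        + (pairSum m (fun s => (1 - x / z s)⁻¹) (E11 m) (E11 m)
          + pairSum m (fun s => (1 - x / z s)⁻¹) (E12 m) (E21 m)) := by
  simp only [pairSum, ← sum_add_distrib]
  conv_lhs => simp only [Kop, smul_add, sum_add_distrib, smul_sum]
  congr 1
  · rw [smul_sum]
    exact sum_congr rfl fun s _ => by rw [E22_eq_neg_E11]; module
  refine sum_sum_erase_eq_of_add_swap (ι := Fin n) (K := ℂ) (M := Module.End ℂ (TV m))
    fun s t hst => ?_
  have hzs : z s ≠ 0 := hz0 s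
  have hzt : z t ≠ 0 := hz0 t
  have hzst : z s - z t ≠ 0 := sub_ne_zero.2 (hz.ne hst)
  have hzts : z t - z s ≠ 0 := sub_ne_zero.2 (hz.ne hst.symm)
  have hxs : z s - x ≠ 0 := sub_ne_zero.2 (hx s).symm
  have hxt : z t - x ≠ 0 := sub_ne_zero.2 (hx t).symm
  rw [rOp_eq m hst, rOp_eq m hst.symm, (commute_E11 m t s).eq, inv_one_sub_div_eq hzs,
    inv_one_sub_div_eq hzt, div_sub_one hzt, div_sub_one hzs, inv_div, inv_div]
  match_scalars <;> field_simp <;> ring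

lemma sum_div_smul_Kop (hz0 : ∀ s, z s ≠ 0) (hz : Function.Injective z) (hx : ∀ s, x ≠ z s)
    (μ : ℂ) :
    ∑ s, ((z s / (x - z s)) • (((m s : ℂ) * ((m s : ℂ) + 2) / 4) • 1 + Kop m z μ s)
        + ((z s) ^ 2 * ((m s : ℂ) * ((m s : ℂ) + 2) / 4) / (x - z s) ^ 2) • 1)
      = ∑ s, ((1 - x / z s)⁻¹ ^ 2 * ((m s : ℂ) * ((m s : ℂ) + 2) / 4)
            - (1 - x / z s)⁻¹ * ((m s : ℂ) * ((m s : ℂ) + 2) / 4)) • 1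
        - (μ • ∑ s, (1 - x / z s)⁻¹ • E11 m s
          + (pairSum m (fun s => (1 - x / z s)⁻¹) (E11 m) (E11 m)
            + pairSum m (fun s => (1 - x / z s)⁻¹) (E12 m) (E21 m))) := by
  rw [← sum_smul_Kop m hz0 hz hx μ, ← sum_sub_distrib]
  refine sum_congr rfl fun s _ => ?_
  have hw : z s / (x - z s) = -(1 - x / z s)⁻¹ := by
    rw [inv_one_sub_div_eq (hz0 s), ← div_neg, neg_sub]
  have hw2 : z s ^ 2 * ((m s : ℂ) * ((m s : ℂ) + 2) / 4) / (x - z s) ^ 2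
      = (z s / (x - z s)) ^ 2 * ((m s : ℂ) * ((m s : ℂ) + 2) / 4) := by
    rw [div_pow]
    ring
  rw [hw2, hw]
  module

end Gaudin

section D2

variable (z : Fin n → ℂ) (x : ℂ)

lemma M22_eq_neg_M11 : M22 m z x = -M11 m z x := by
  simp only [M22, M11, e22T_eq_neg_e11T, E22_eq_neg_E11, smul_neg, sum_neg_distrib]
  abel

lemma smul_M22d :
    (2 * (Real.pi : ℂ) * I * x) • M22d m z x
      = -(2 * (Real.pi : ℂ) * I) ^ 2 •
          ∑ s, ((1 - x / z s)⁻¹ * ((1 - x / z s)⁻¹ - 1)) • E11 m s := by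
  simp only [M22d, E22_eq_neg_E11, smul_neg, sum_neg_distrib, smul_sum, smul_smul]
  rw [← sum_neg_distrib]
  refine sum_congr rfl fun s _ => ?_
  rw [← neg_smul, ← mul_inv_mul_inv_one_sub_div_sq]
  ring_nf

lemma M12_eq : M12 m z x = (2 * (Real.pi : ℂ) * I) • ∑ t, ((1 - x / z t)⁻¹ - 1) • E21 m t := by
  have hterm : ∀ t, ((1 - x / z t)⁻¹ - 1) • E21 m t = (1 - x / z t)⁻¹ • E21 m t - E21 m t :=
    fun t => by module
  rw [M12, e21T, sum_congr rfl fun t _ => hterm t, sum_sub_distrib]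
  module

lemma M21_mul_M12 :
    M21 m z x * M12 m z x
      = (2 * (Real.pi : ℂ) * I) ^ 2 •
          ∑ s, ∑ t, ((1 - x / z s)⁻¹ * ((1 - x / z t)⁻¹ - 1)) • (E12 m s * E21 m t) := by
  simp only [M21, M12_eq, smul_mul_smul_comm, sum_mul_sum, sq]

lemma D2_eq_add_pairSum (μ : ℂ) :
    D2 m z μ x = ((-((Real.pi : ℂ) * I * μ)) • 1 + M11 m z x) *
        (((Real.pi : ℂ) * I * μ) • 1 + -M11 m z x)
      + (2 * (Real.pi : ℂ) * I) ^ 2 • ∑ s, ((1 - x / z s)⁻¹ * ((1 - x / z s)⁻¹ - 1)) • E11 m s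
      - (2 * (Real.pi : ℂ) * I) ^ 2 • ∑ s, ((1 - x / z s)⁻¹ * ((1 - x / z s)⁻¹ - 1)) •
          (((m s : ℂ) * ((m s : ℂ) + 2) / 4) • 1 - E11 m s ^ 2 + E11 m s)
      + (2 * (Real.pi : ℂ) * I) ^ 2 • pairSum m (fun s => (1 - x / z s)⁻¹) (E12 m) (E21 m) := by
  have hoff : ∑ s, ∑ t ∈ univ.erase s, ((1 - x / z s)⁻¹ * ((1 - x / z t)⁻¹ - 1)) •
      (E12 m s * E21 m t) = -pairSum m (fun s => (1 - x / z s)⁻¹) (E12 m) (E21 m) := by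
    simp only [pairSum, ← sum_neg_distrib]
    exact sum_congr rfl fun s _ => sum_congr rfl fun t _ => by module
  rw [D2, M22_eq_neg_M11, smul_M22d, M21_mul_M12, sum_sum_eq_sum_add_sum_sum_erase, hoff]
  simp only [E12_mul_E21_self]
  module

end D2

section Conjugation

variable {z : Fin n → ℂ} {x : ℂ}

lemma D2_eq (hz0 : ∀ s, z s ≠ 0) (hz : Function.Injective z) (hx : ∀ s, x ≠ z s) (μ : ℂ) :
    D2 m z μ x
      = -((Real.pi : ℂ) * I) ^ 2 • (μ ^ 2 • 1 + μ • (e11T m - e22T m) - e11T m * e22T m)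
        - (2 * (Real.pi : ℂ) * I) ^ 2 • ∑ s,
            ((z s / (x - z s)) • (((m s : ℂ) * ((m s : ℂ) + 2) / 4) • 1 + Kop m z μ s)
              + ((z s) ^ 2 * ((m s : ℂ) * ((m s : ℂ) + 2) / 4) / (x - z s) ^ 2) • 1) := by
  set a : Fin n → ℂ := fun s => (1 - x / z s)⁻¹
  set C : Fin n → ℂ := fun s => (m s : ℂ) * ((m s : ℂ) + 2) / 4
  suffices hdiag : ((-((Real.pi : ℂ) * I * μ)) • 1 + M11 m z x) *
        (((Real.pi : ℂ) * I * μ) • 1 + -M11 m z x)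
      + (2 * (Real.pi : ℂ) * I) ^ 2 • ∑ s, (a s * (a s - 1)) • E11 m s
      - (2 * (Real.pi : ℂ) * I) ^ 2 • ∑ s, (a s * (a s - 1)) • (C s • 1 - E11 m s ^ 2 + E11 m s)
      = -((Real.pi : ℂ) * I) ^ 2 • (μ ^ 2 • 1 + μ • (e11T m - -e11T m) - e11T m * -e11T m)
        - (2 * (Real.pi : ℂ) * I) ^ 2 • (∑ s, (a s ^ 2 * C s - a s * C s) • 1
            - (μ • ∑ s, a s • E11 m s + pairSum m a (E11 m) (E11 m))) by
    rw [D2_eq_add_pairSum, sum_div_smul_Kop m hz0 hz hx, e22T_eq_neg_e11T, hdiag]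
    module
  -- all operators left are diagonal, so the identity is transported from `TV m` by `Algebra.lmul`
  simp only [M11, e11T, pairSum, E11_eq_lmul]
  rw [← map_one (Algebra.lmul ℂ (TV m))]
  simp only [← map_smul, ← map_sum, ← map_pow, ← map_mul, ← map_add, ← map_sub, ← map_neg]
  congr 1
  funext i
  simp only [Pi.add_apply, Pi.mul_apply, Pi.sub_apply, Pi.neg_apply, Pi.smul_apply,
    Pi.one_apply, Pi.pow_apply, Finset.sum_apply, smul_eq_mul, mul_one]
  linear_combination gaudin_diagonal_identity a (fun s => e11Eig m s i) C ((Real.pi : ℂ) * I) μ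

lemma sq_sum_div_add_sum_div_sq (hx : ∀ s, x ≠ z s) :
    (∑ s, ((m s : ℂ) / 2) / (x - z s)) ^ 2 + ∑ s, ((m s : ℂ) / 2) / (x - z s) ^ 2
      = ∑ s, ((m s : ℂ) * ((m s : ℂ) + 2) / 4) / (x - z s) ^ 2
        + ∑ s, ∑ p ∈ univ.erase s, ((m s : ℂ) * (m p : ℂ) / 4) / ((x - z s) * (x - z p)) := by
  rw [sq, sum_mul_sum, sum_sum_eq_sum_add_sum_sum_erase, add_right_comm, ← sum_add_distrib]
  congr 1
  · refine sum_congr rfl fun s _ => ?_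
    have : x - z s ≠ 0 := sub_ne_zero.2 (hx s)
    field_simp
    ring
  · exact sum_congr rfl fun s _ => sum_congr rfl fun p _ => by rw [div_mul_div_comm]; ring

lemma D2_eq_smul_DconjCoeff (hz0 : ∀ s, z s ≠ 0) (hz : Function.Injective z) (hx0 : x ≠ 0)
    (hx : ∀ s, x ≠ z s) (μ : ℂ) :
    D2 m z μ x = (2 * (Real.pi : ℂ) * I * x) ^ 2 • (DconjCoeff n m z μ x
      - ((∑ s, ((m s : ℂ) / 2) / (x - z s)) ^ 2 + ∑ s, ((m s : ℂ) / 2) / (x - z s) ^ 2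
          - (∑ s, ((m s : ℂ) / 2) / (x - z s)) / x) • 1) := by
  have hT : -(1 / x) * (∑ s, ((m s : ℂ) / 2) / (x - z s))
        + ∑ s, ((m s : ℂ) * ((m s : ℂ) + 2) / 4) / (x - z s) ^ 2
        + ∑ s, ∑ p ∈ univ.erase s, ((m s : ℂ) * (m p : ℂ) / 4) / ((x - z s) * (x - z p))
      = (∑ s, ((m s : ℂ) / 2) / (x - z s)) ^ 2 + ∑ s, ((m s : ℂ) / 2) / (x - z s) ^ 2
          - (∑ s, ((m s : ℂ) / 2) / (x - z s)) / x := by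
    rw [sq_sum_div_add_sum_div_sq m hx]
    ring
  rw [D2_eq m hz0 hz hx, DconjCoeff, hT]
  match_scalars <;> field_simp <;> ring

end Conjugation

section LogDeriv

open Filter Topology

variable {𝕜 E : Type*} [NontriviallyNormedField 𝕜] [NormedAddCommGroup E] [NormedSpace 𝕜 E]
  {h h' φ : 𝕜 → 𝕜} {f f' : 𝕜 → E} {x : 𝕜}

lemma HasDerivAt.eq_smul_of_logDeriv {g' : E} (hg : HasDerivAt (fun y => h y • f y) g' x)
    (hh : HasDerivAt h (h' x) x) (hlog : h' x = φ x * h x) (hf : HasDerivAt f (f' x) x) :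
    g' = h x • (f' x + φ x • f x) := by
  rw [hg.unique (hh.smul hf), hlog]
  module

lemma HasDerivAt.eq_smul_of_logDeriv₂ {U : Set 𝕜} {g' : 𝕜 → E} {f'' g'' : E} {φ' : 𝕜}
    (hg'' : HasDerivAt g' g'' x) (hU : U ∈ 𝓝 x)
    (hg' : ∀ y ∈ U, HasDerivAt (fun y => h y • f y) (g' y) y)
    (hh : ∀ y ∈ U, HasDerivAt h (h' y) y) (hlog : ∀ y ∈ U, h' y = φ y * h y)
    (hφ : HasDerivAt φ φ' x) (hf : ∀ y ∈ U, HasDerivAt f (f' y) y) (hf' : HasDerivAt f' f'' x) :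
    g'' = h x • (f'' + (2 * φ x) • f' x + (φ' + φ x ^ 2) • f x) := by
  have hxU := mem_of_mem_nhds hU
  have hg'_eq : g' =ᶠ[𝓝 x] fun y => h y • (f' y + φ y • f y) :=
    eventually_of_mem hU fun y hy =>
      HasDerivAt.eq_smul_of_logDeriv (hg' y hy) (hh y hy) (hlog y hy) (hf y hy)
  rw [hg''.unique (hg'_eq.hasDerivAt_iff.2 ((hh x hxU).smul (hf'.add (hφ.smul (hf x hxU))))),
    hlog x hxU]
  module

end LogDeriv

theorem statement16_general
    (n : ℕ) (m : Fin n → ℕ)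
    (z : Fin n → ℂ) (hz0 : ∀ s, z s ≠ 0) (hz : Function.Injective z) (μ : ℂ)
    (U : Set ℂ) (hU : IsOpen U)
    (hUavoid : ∀ x ∈ U, x ≠ 0 ∧ ∀ s, x ≠ z s)
    (h h' : ℂ → ℂ)
    (hh : ∀ x ∈ U, HasDerivAt h (h' x) x)
    (hh0 : ∀ x ∈ U, h x ≠ 0)
    (hhlog : ∀ x ∈ U, h' x / h x = -∑ s, ((m s : ℂ) / 2) / (x - z s))
    (f f' f'' : ℂ → TV m)
    (hf : ∀ x ∈ U, HasDerivAt f (f' x) x)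
    (hf' : ∀ x ∈ U, HasDerivAt f' (f'' x) x)
    (g g' g'' : ℂ → TV m)
    (hg : ∀ x, g x = h x • f x)
    (hg' : ∀ x ∈ U, HasDerivAt g (g' x) x)
    (hg'' : ∀ x ∈ U, HasDerivAt g' (g'' x) x) :
    ∀ x ∈ U,
      (((2 * (Real.pi : ℂ) * Complex.I * x) ^ 2)⁻¹ * (h x)⁻¹) •
          ((2 * (Real.pi : ℂ) * Complex.I) ^ 2 • (x ^ 2 • g'' x + x • g' x)
            + D2 m z μ x (h x • f x))
        = f'' x + (1 / x - ∑ s, (m s : ℂ) / (x - z s)) • f' x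
          + DconjCoeff n m z μ x (f x) := by
  intro x hx
  obtain ⟨hx0, hxz⟩ := hUavoid x hx
  have hne : ∀ s, x - z s ≠ 0 := fun s => sub_ne_zero.2 (hxz s)
  set S : ℂ → ℂ := fun y => ∑ s, ((m s : ℂ) / 2) / (y - z s) with hS
  have hlog : ∀ y ∈ U, h' y = -S y * h y := fun y hy => by
    rw [← hhlog y hy, div_mul_cancel₀ _ (hh0 y hy)]
  have hS' : HasDerivAt (fun y => -S y) (∑ s, ((m s : ℂ) / 2) / (x - z s) ^ 2) x := by
    refine (HasDerivAt.fun_sum fun s _ => (hasDerivAt_const x ((m s : ℂ) / 2)).div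
      ((hasDerivAt_id x).sub_const (z s)) (hne s)).neg.congr_deriv ?_
    rw [← sum_neg_distrib]
    exact sum_congr rfl fun s _ => by simp only [id]; ring
  have hmS : ∑ s, (m s : ℂ) / (x - z s) = 2 * S x := by
    rw [hS, mul_sum]
    exact sum_congr rfl fun s _ => by ring
  rw [show g = fun y => h y • f y from funext hg] at hg'
  rw [HasDerivAt.eq_smul_of_logDeriv₂ (φ := fun y => -S y) (hg'' x hx) (hU.mem_nhds hx) hg' hh
      hlog hS' hf (hf' x hx),
    HasDerivAt.eq_smul_of_logDeriv (φ := fun y => -S y) (hg' x hx) (hh x hx) (hlog x hx) (hf x hx),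
    map_smul, D2_eq_smul_DconjCoeff m hz0 hz hx0 hxz μ, hmS]
  have hhx := hh0 x hx
  simp only [hS, LinearMap.smul_apply, LinearMap.sub_apply, Module.End.one_apply]
  match_scalars <;> field_simp <;> ring

/-- Theorem 8.1 of the paper: the conjugation formula
`𝒟ᶜ = (2πi x)⁻² Π_s (x-z_s)^{m_s/2} ∘ 𝒟 ∘ Π_s (x-z_s)^{-m_s/2}` for the universal
differential operator `𝒟 = ∂_u² + D₂(x)`, `∂_u = -2πi x ∂_x`.  Here `h` is a holomorphic
nowhere-vanishing branch of `Π_s (x-z_s)^{-m_s/2}` on an open `U ⊆ ℂ∖({0} ∪ {z_s})`,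
specified by its logarithmic derivative, and `f` is an arbitrary holomorphic `V`-valued
function on `U`, with `g = h ⬝ f`. -/
theorem statement16
    (n : ℕ) (hn : 1 < n) (m : Fin n → ℕ) (hm : ∀ s, 0 < m s)
    (z : Fin n → ℂ) (hz0 : ∀ s, z s ≠ 0) (hz : Function.Injective z) (μ : ℂ)
    (U : Set ℂ) (hU : IsOpen U)
    (hUavoid : ∀ x ∈ U, x ≠ 0 ∧ ∀ s, x ≠ z s)
    (h h' : ℂ → ℂ)
    (hh : ∀ x ∈ U, HasDerivAt h (h' x) x)
    (hh0 : ∀ x ∈ U, h x ≠ 0)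
    (hhlog : ∀ x ∈ U, h' x / h x = -∑ s, ((m s : ℂ) / 2) / (x - z s))
    (f f' f'' : ℂ → TV m)
    (hf : ∀ x ∈ U, HasDerivAt f (f' x) x)
    (hf' : ∀ x ∈ U, HasDerivAt f' (f'' x) x)
    (g g' g'' : ℂ → TV m)
    (hg : ∀ x, g x = h x • f x)
    (hg' : ∀ x ∈ U, HasDerivAt g (g' x) x)
    (hg'' : ∀ x ∈ U, HasDerivAt g' (g'' x) x) :
    ∀ x ∈ U,
      (((2 * (Real.pi : ℂ) * Complex.I * x) ^ 2)⁻¹ * (h x)⁻¹) •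
          ((2 * (Real.pi : ℂ) * Complex.I) ^ 2 • (x ^ 2 • g'' x + x • g' x)
            + D2 m z μ x (h x • f x))
        = f'' x + (1 / x - ∑ s, (m s : ℂ) / (x - z s)) • f' x
          + DconjCoeff n m z μ x (f x) :=
  statement16_general n m z hz0 hz μ U hU hUavoid h h' hh hh0 hhlog f f' f'' hf hf' g g' g'' hg hg'
    hg''

end
end Paper
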